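/- Let Φ be the Koenigs function associated to β ∈ (0, 1/e) and set ε(r) = 1/log Φ(r) for r large enough that Φ(r) > 1. Then ε is differentiable for all sufficiently large r and lim_{r→∞} ε'(r) · r · log r = 0. Consequently ρ(r) := 1/2 + ε(r) satisfies lim_{r→∞} ρ(r) = 1/2 and lim_{r→∞} r · ρ'(r) · log r = 0, i.e. ρ is a proximate order. -/

import Mathlib

/-!
Write `a_k(x) = Lᵏ(x - ξ)`. The approximants `(βξ)ⁿ aₙ` have derivatives
`∏_{k<n} ξ / (a_k + ξ)`, which converge locally uniformly, so `Φ' = D := ∏_k ξ / (a_k + ξ)`.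
The shift `a_{k+1}(e^{βx}) = a_k(x)` gives `Φ(e^{βx}) = βξ Φ(x)`, hence `Φ → ∞`, and
`e^{βx} D(e^{βx}) = ξ D(x)`; applied twice together with `D ≤ 1` it bounds `r Φ'(r) log r` by `βξ²`.
Since `ε' = -Φ' / (Φ log² Φ)`, it follows that `ε'(r) r log r → 0`.
-/

open Filter MeasureTheory Set
open scoped Topology Real

noncomputable section

/-- The escaping set of an entire function: points whose iterates tend to infinity. -/
def escapingSet (f : ℂ → ℂ) : Set ℂ :=
  {z : ℂ | Tendsto (fun n : ℕ => ‖f^[n] z‖) atTop atTop}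

/-- The maximum modulus `M(r, f)`. -/
def maxModulus (f : ℂ → ℂ) (r : ℝ) : ℝ :=
  sSup ((fun z => ‖f z‖) '' Metric.sphere (0 : ℂ) r)

/-- Critical values of `f`. -/
def criticalValues (f : ℂ → ℂ) : Set ℂ :=
  {a : ℂ | ∃ c : ℂ, deriv f c = 0 ∧ f c = a}

/-- Finite asymptotic values of `f`. -/
def asymptoticValues (f : ℂ → ℂ) : Set ℂ :=
  {a : ℂ | ∃ γ : ℝ → ℂ, ContinuousOn γ (Set.Ici 0) ∧
    Tendsto (fun t => ‖γ t‖) atTop atTop ∧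
    Tendsto (fun t => f (γ t)) atTop (𝓝 a)}

/-- The singular set `S(f)`. -/
def singularSet (f : ℂ → ℂ) : Set ℂ :=
  closure (criticalValues f ∪ asymptoticValues f)

def IsPolynomialFun (f : ℂ → ℂ) : Prop :=
  ∃ p : Polynomial ℂ, ∀ z, f z = p.eval z

/-- A transcendental entire function. -/
def TranscendentalEntire (f : ℂ → ℂ) : Prop :=
  Differentiable ℂ f ∧ ¬ IsPolynomialFun f

/-- The Eremenko–Lyubich class `B`. -/
def EremenkoLyubichClass (f : ℂ → ℂ) : Prop :=
  TranscendentalEntire f ∧ Bornology.IsBounded (singularSet f)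

/-- `θ(r)`: the measure of the set of angles at which `|f(r e^{it})| < r0`. -/
def thetaMeasure (f : ℂ → ℂ) (r0 r : ℝ) : ℝ :=
  (volume {t : ℝ | t ∈ Set.Icc 0 (2 * Real.pi) ∧
      ‖f ((r : ℂ) * Complex.exp (Complex.I * (t : ℂ)))‖ < r0}).toReal

/-- The auxiliary map `L(x) = log(x + ξ)/β − ξ`. -/
def koenigsL (β ξ : ℝ) : ℝ → ℝ := fun y => Real.log (y + ξ) / β - ξ

/-- `Φ` is the Koenigs function associated to `β`: `ξ` is the repelling fixed point
of `E_β(x) = e^{βx}` with multiplier `λ = βξ > 1`, and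
`Φ(x) = lim_{n→∞} λ^n L^n(x − ξ)` for `x ≥ ξ`. -/
def IsKoenigs (β ξ : ℝ) (Φ : ℝ → ℝ) : Prop :=
  Real.exp (β * ξ) = ξ ∧ 1 < β * ξ ∧
  ∀ x ≥ ξ, Tendsto (fun n : ℕ => (β * ξ) ^ n * (koenigsL β ξ)^[n] (x - ξ))
    atTop (𝓝 (Φ x))

/-- `ε(r) = 1 / log Φ(r)`. -/
def epsK (Φ : ℝ → ℝ) (r : ℝ) : ℝ := 1 / Real.log (Φ r)

/-- The proximate order `ρ(r) = 1/2 + ε(r)`. -/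
def rhoK (Φ : ℝ → ℝ) (r : ℝ) : ℝ := 1 / 2 + epsK Φ r

open Real

lemma uniformContinuousOn_exp_Iic (a : ℝ) : UniformContinuousOn exp (Iic a) := by
  have h : UniformContinuousOn (fun x : ℝ => (Complex.exp x).re) (Iic a) :=
    Complex.uniformContinuous_re.comp_uniformContinuousOn <|
      (UniformContinuousOn.cexp a).comp
        Complex.isometry_ofReal.uniformContinuous.uniformContinuousOn fun x hx => by simpa using hx
  simpa only [Complex.exp_ofReal_re] using h

lemma tendsto_atTop_of_map_eq_mul {f E : ℝ → ℝ} {a c : ℝ} (hc : 1 < c) (ha : 0 < f a)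
    (hf : MonotoneOn f (Ici a)) (hE : MapsTo E (Ici a) (Ici a))
    (hfE : ∀ x ≥ a, f (E x) = c * f x) : Tendsto f atTop atTop := by
  have horbit : ∀ n, E^[n] a ∈ Ici a := fun n => hE.iterate n self_mem_Ici
  have hvalue : ∀ n, f (E^[n] a) = c ^ n * f a := by
    intro n
    induction n with
    | zero => simp
    | succ n ih => rw [Function.iterate_succ_apply', hfE _ (horbit n), ih, pow_succ']; ring
  refine tendsto_atTop.2 fun b => ?_
  obtain ⟨n, hn⟩ :=
    ((tendsto_pow_atTop_atTop_of_one_lt hc).atTop_mul_const ha).eventually_ge_atTop b |>.exists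
  filter_upwards [eventually_ge_atTop (E^[n] a)] with r hr
  calc b ≤ c ^ n * f a := hn
    _ = f (E^[n] a) := (hvalue n).symm
    _ ≤ f r := hf (horbit n) ((horbit n).trans hr) hr

section KoenigsMap

variable {β ξ : ℝ}

lemma exp_mul_koenigsL (hfix : exp (β * ξ) = ξ) (hβ : β ≠ 0) {y : ℝ} (hy : 0 < y + ξ) :
    exp (β * koenigsL β ξ y) = (y + ξ) / ξ := by
  rw [koenigsL, mul_sub, mul_div_cancel₀ _ hβ, exp_sub, exp_log hy, hfix]

lemma koenigsL_nonneg (hβ : 0 < β) (hfix : exp (β * ξ) = ξ) {y : ℝ} (hy : 0 ≤ y) :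
    0 ≤ koenigsL β ξ y := by
  have hξ : 0 < ξ := hfix ▸ exp_pos _
  have h : 1 ≤ exp (β * koenigsL β ξ y) := by
    rw [exp_mul_koenigsL hfix hβ.ne' (by linarith), le_div_iff₀ hξ]
    linarith
  exact (mul_nonneg_iff_of_pos_left hβ).1 (one_le_exp_iff.1 h)

lemma koenigsL_le (hβ : 0 < β) (hfix : exp (β * ξ) = ξ) {y : ℝ} (hy : 0 ≤ y) :
    koenigsL β ξ y ≤ (β * ξ)⁻¹ * y := by
  have hξ : 0 < ξ := hfix ▸ exp_pos _
  have h : exp (β * koenigsL β ξ y) ≤ exp (y / ξ) := by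
    rw [exp_mul_koenigsL hfix hβ.ne' (by linarith)]
    calc (y + ξ) / ξ = y / ξ + 1 := by field_simp
      _ ≤ exp (y / ξ) := add_one_le_exp _
  rw [exp_le_exp, ← le_div_iff₀' hβ] at h
  calc koenigsL β ξ y ≤ y / ξ / β := h
    _ = (β * ξ)⁻¹ * y := by field_simp

lemma hasDerivAt_koenigsL {y : ℝ} (hy : 0 < y + ξ) :
    HasDerivAt (koenigsL β ξ) (β * (y + ξ))⁻¹ y := by
  have h := ((((hasDerivAt_id' y).add_const ξ).log hy.ne').div_const β).sub_const ξ
  exact h.congr_deriv (by field_simp)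

lemma koenigsL_exp_sub (hβ : β ≠ 0) (x : ℝ) : koenigsL β ξ (exp (β * x) - ξ) = x - ξ := by
  rw [koenigsL, sub_add_cancel, log_exp, mul_div_cancel_left₀ _ hβ]

lemma le_exp_mul (hfix : exp (β * ξ) = ξ) (hl : 1 < β * ξ) {x : ℝ} (hx : ξ ≤ x) :
    x ≤ exp (β * x) := by
  have hξ : 0 < ξ := hfix ▸ exp_pos _
  calc x ≤ ξ * (1 + β * (x - ξ)) := by nlinarith
    _ ≤ ξ * exp (β * (x - ξ)) := by gcongr; linarith [add_one_le_exp (β * (x - ξ))]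
    _ = exp (β * x) := by rw [mul_sub, exp_sub, hfix, mul_div_cancel₀ _ hξ.ne']

end KoenigsMap

section KoenigsOrbit

variable {β ξ : ℝ}

def koenigsOrbit (β ξ x : ℝ) (k : ℕ) : ℝ := (koenigsL β ξ)^[k] (x - ξ)

@[simp]
lemma koenigsOrbit_zero (x : ℝ) : koenigsOrbit β ξ x 0 = x - ξ := rfl

lemma koenigsOrbit_succ (x : ℝ) (k : ℕ) :
    koenigsOrbit β ξ x (k + 1) = koenigsL β ξ (koenigsOrbit β ξ x k) :=
  Function.iterate_succ_apply' _ _ _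

lemma koenigsOrbit_exp_succ (hβ : β ≠ 0) (x : ℝ) (k : ℕ) :
    koenigsOrbit β ξ (exp (β * x)) (k + 1) = koenigsOrbit β ξ x k := by
  rw [koenigsOrbit, Function.iterate_succ_apply, koenigsL_exp_sub hβ, koenigsOrbit]

lemma koenigsOrbit_nonneg (hβ : 0 < β) (hfix : exp (β * ξ) = ξ) {x : ℝ} (hx : ξ ≤ x) (k : ℕ) :
    0 ≤ koenigsOrbit β ξ x k := by
  induction k with
  | zero => simpa using hx
  | succ k ih => rw [koenigsOrbit_succ]; exact koenigsL_nonneg hβ hfix ih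

lemma koenigsOrbit_le (hβ : 0 < β) (hfix : exp (β * ξ) = ξ) {x : ℝ} (hx : ξ ≤ x) (k : ℕ) :
    koenigsOrbit β ξ x k ≤ (x - ξ) * (β * ξ)⁻¹ ^ k := by
  induction k with
  | zero => simp
  | succ k ih =>
    have hξ : 0 < ξ := hfix ▸ exp_pos _
    calc koenigsOrbit β ξ x (k + 1) ≤ (β * ξ)⁻¹ * koenigsOrbit β ξ x k := by
          rw [koenigsOrbit_succ]; exact koenigsL_le hβ hfix (koenigsOrbit_nonneg hβ hfix hx k)
      _ ≤ (β * ξ)⁻¹ * ((x - ξ) * (β * ξ)⁻¹ ^ k) := by gcongr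
      _ = (x - ξ) * (β * ξ)⁻¹ ^ (k + 1) := by ring

lemma summable_koenigsOrbit (hβ : 0 < β) (hfix : exp (β * ξ) = ξ) (hl : 1 < β * ξ) {x : ℝ}
    (hx : ξ ≤ x) : Summable (koenigsOrbit β ξ x) :=
  .of_nonneg_of_le (koenigsOrbit_nonneg hβ hfix hx) (koenigsOrbit_le hβ hfix hx)
    ((summable_geometric_of_lt_one (by positivity) (inv_lt_one_of_one_lt₀ hl)).mul_left _)

lemma hasDerivAt_koenigsOrbit (hβ : 0 < β) (hfix : exp (β * ξ) = ξ) {x : ℝ} (hx : ξ ≤ x)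
    (n : ℕ) : HasDerivAt (fun y => koenigsOrbit β ξ y n)
      (exp (∑ k ∈ Finset.range n, -(β * koenigsOrbit β ξ x (k + 1))) / (β * ξ) ^ n) x := by
  have hξ : 0 < ξ := hfix ▸ exp_pos _
  induction n with
  | zero => simpa using (hasDerivAt_id' x).sub_const ξ
  | succ n ih =>
    have ha : 0 < koenigsOrbit β ξ x n + ξ := by linarith [koenigsOrbit_nonneg hβ hfix hx n]
    have hstep : exp (-(β * koenigsOrbit β ξ x (n + 1))) = ξ / (koenigsOrbit β ξ x n + ξ) := by
      rw [exp_neg, koenigsOrbit_succ, exp_mul_koenigsL hfix hβ.ne' ha, inv_div]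
    rw [show (fun y => koenigsOrbit β ξ y (n + 1)) = koenigsL β ξ ∘ fun y => koenigsOrbit β ξ y n
      from funext fun y => koenigsOrbit_succ y n]
    refine ((hasDerivAt_koenigsL ha).comp x ih).congr_deriv ?_
    rw [Finset.sum_range_succ, exp_add, hstep]
    field_simp
    ring

end KoenigsOrbit

section KoenigsDeriv

variable {β ξ : ℝ}

/-- `Φ'`, written as `∏ ξ / (a_k + ξ)` through `ξ / (a_k + ξ) = exp (-β a_{k+1})`,
where `a_k = koenigsOrbit β ξ x k`. -/
def koenigsDeriv (β ξ x : ℝ) : ℝ := exp (∑' k, -(β * koenigsOrbit β ξ x (k + 1)))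

lemma koenigsDeriv_pos (x : ℝ) : 0 < koenigsDeriv β ξ x := exp_pos _

lemma koenigsDeriv_le_one (hβ : 0 < β) (hfix : exp (β * ξ) = ξ) {x : ℝ} (hx : ξ ≤ x) :
    koenigsDeriv β ξ x ≤ 1 :=
  exp_le_one_iff.2 <| tsum_nonpos fun _ =>
    neg_nonpos.2 (mul_nonneg hβ.le (koenigsOrbit_nonneg hβ hfix hx _))

lemma exp_mul_koenigsDeriv_exp (hβ : 0 < β) (hfix : exp (β * ξ) = ξ) (hl : 1 < β * ξ) {x : ℝ}
    (hx : ξ ≤ x) : exp (β * x) * koenigsDeriv β ξ (exp (β * x)) = ξ * koenigsDeriv β ξ x := by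
  have hEx : ξ ≤ exp (β * x) := hx.trans (le_exp_mul hfix hl hx)
  have hsum : Summable fun k => -(β * koenigsOrbit β ξ (exp (β * x)) (k + 1)) :=
    (((summable_nat_add_iff 1).2 (summable_koenigsOrbit hβ hfix hl hEx)).mul_left β).neg
  rw [koenigsDeriv, hsum.tsum_eq_zero_add]
  simp only [koenigsOrbit_exp_succ hβ.ne', koenigsOrbit_zero]
  rw [exp_add, koenigsDeriv, ← mul_assoc, ← exp_add,
    show β * x + -(β * (x - ξ)) = β * ξ by ring, hfix]

lemma exists_exp_mul_eq (hβ : 0 < β) (hfix : exp (β * ξ) = ξ) {r : ℝ} (hr : ξ ≤ r) :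
    ∃ s, ξ ≤ s ∧ exp (β * s) = r := by
  have hξ : 0 < ξ := hfix ▸ exp_pos _
  refine ⟨log r / β, ?_, ?_⟩
  · rw [le_div_iff₀ hβ, mul_comm, ← log_exp (β * ξ), hfix]
    exact log_le_log hξ hr
  · rw [mul_div_cancel₀ _ hβ.ne', exp_log (hξ.trans_le hr)]

lemma mul_koenigsDeriv_mul_log_le (hβ : 0 < β) (hfix : exp (β * ξ) = ξ) (hl : 1 < β * ξ)
    {r : ℝ} (hr : ξ ≤ r) : r * koenigsDeriv β ξ r * log r ≤ β * ξ ^ 2 := by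
  have hξ : 0 < ξ := hfix ▸ exp_pos _
  obtain ⟨s, hs, rfl⟩ := exists_exp_mul_eq hβ hfix hr
  obtain ⟨t, ht, rfl⟩ := exists_exp_mul_eq hβ hfix hs
  calc exp (β * exp (β * t)) * koenigsDeriv β ξ (exp (β * exp (β * t)))
        * log (exp (β * exp (β * t)))
      = β * ξ * (exp (β * t) * koenigsDeriv β ξ (exp (β * t))) := by
        rw [exp_mul_koenigsDeriv_exp hβ hfix hl hs, log_exp]; ring
    _ = β * ξ * (ξ * koenigsDeriv β ξ t) := by rw [exp_mul_koenigsDeriv_exp hβ hfix hl ht]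
    _ ≤ β * ξ * (ξ * 1) := by gcongr; exact koenigsDeriv_le_one hβ hfix ht
    _ = β * ξ ^ 2 := by ring

lemma tendstoUniformlyOn_koenigsDeriv (hβ : 0 < β) (hfix : exp (β * ξ) = ξ) (hl : 1 < β * ξ)
    (b : ℝ) :
    TendstoUniformlyOn (fun n x => exp (∑ k ∈ Finset.range n, -(β * koenigsOrbit β ξ x (k + 1))))
      (koenigsDeriv β ξ) atTop (Ioo ξ b) := by
  have hterm : ∀ k, ∀ x ∈ Ioo ξ b, -(β * koenigsOrbit β ξ x (k + 1)) ≤ 0 := fun k x hx =>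
    neg_nonpos.2 (mul_nonneg hβ.le (koenigsOrbit_nonneg hβ hfix hx.1.le _))
  have hbound : ∀ k, ∀ x ∈ Ioo ξ b,
      ‖-(β * koenigsOrbit β ξ x (k + 1))‖ ≤ β * ((b - ξ) * (β * ξ)⁻¹ ^ (k + 1)) := by
    intro k x hx
    rw [norm_neg, norm_mul, Real.norm_of_nonneg hβ.le,
      Real.norm_of_nonneg (koenigsOrbit_nonneg hβ hfix hx.1.le _)]
    gcongr
    exact (koenigsOrbit_le hβ hfix hx.1.le _).trans (by gcongr; exact hx.2.le)
  have hsum := tendstoUniformlyOn_tsum_nat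
    ((((summable_nat_add_iff 1).2 (summable_geometric_of_lt_one (by positivity)
      (inv_lt_one_of_one_lt₀ hl))).mul_left (b - ξ)).mul_left β) hbound
  exact (uniformContinuousOn_exp_Iic 0).comp_tendstoUniformlyOn_eventually
    (.of_forall fun n x hx => Finset.sum_nonpos fun k _ => hterm k x hx)
    (fun x hx => tsum_nonpos fun k => hterm k x hx) hsum

end KoenigsDeriv

namespace IsKoenigs

variable {β ξ : ℝ} {Φ : ℝ → ℝ}

lemma beta_pos (hK : IsKoenigs β ξ Φ) : 0 < β :=
  pos_of_mul_pos_left (one_pos.trans hK.2.1) (hK.1 ▸ exp_pos _).le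

lemma hasDerivAt (hK : IsKoenigs β ξ Φ) {r : ℝ} (hr : ξ < r) :
    HasDerivAt Φ (koenigsDeriv β ξ r) r := by
  have hβ := hK.beta_pos
  obtain ⟨hfix, hl, hlim⟩ := hK
  have hderiv : ∀ n, ∀ x ∈ Ioo ξ (r + 1), HasDerivAt (fun y => (β * ξ) ^ n * koenigsOrbit β ξ y n)
      (exp (∑ k ∈ Finset.range n, -(β * koenigsOrbit β ξ x (k + 1)))) x := fun n x hx =>
    ((hasDerivAt_koenigsOrbit hβ hfix hx.1.le n).const_mul _).congr_deriv
      (mul_div_cancel₀ _ (by positivity))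
  exact hasDerivAt_of_tendstoUniformlyOn isOpen_Ioo (tendstoUniformlyOn_koenigsDeriv hβ hfix hl _)
    (.of_forall hderiv) (fun x hx => hlim x hx.1.le) ⟨hr, lt_add_one r⟩

lemma nonneg (hK : IsKoenigs β ξ Φ) {x : ℝ} (hx : ξ ≤ x) : 0 ≤ Φ x :=
  ge_of_tendsto' (hK.2.2 x hx) fun n =>
    mul_nonneg (pow_nonneg (one_pos.trans hK.2.1).le n)
      (koenigsOrbit_nonneg hK.beta_pos hK.1 hx n)

lemma strictMonoOn (hK : IsKoenigs β ξ Φ) : StrictMonoOn Φ (Ioi ξ) :=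
  strictMonoOn_of_hasDerivWithinAt_pos (convex_Ioi ξ)
    (fun x hx => (hK.hasDerivAt hx).continuousAt.continuousWithinAt)
    (fun x hx => (hK.hasDerivAt (by simpa using hx)).hasDerivWithinAt)
    (fun x _ => koenigsDeriv_pos x)

lemma map_exp (hK : IsKoenigs β ξ Φ) {x : ℝ} (hx : ξ ≤ x) :
    Φ (exp (β * x)) = β * ξ * Φ x := by
  have hβ := hK.beta_pos
  obtain ⟨hfix, hl, hlim⟩ := hK
  have hshift := (hlim _ (hx.trans (le_exp_mul hfix hl hx))).comp (tendsto_add_atTop_nat 1)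
  refine tendsto_nhds_unique hshift ?_
  convert (hlim x hx).const_mul (β * ξ) using 2 with n
  simp only [Function.comp_apply]
  rw [← koenigsOrbit, koenigsOrbit_exp_succ hβ.ne', koenigsOrbit, pow_succ']
  ring

lemma tendsto_atTop (hK : IsKoenigs β ξ Φ) : Tendsto Φ atTop atTop := by
  have hpos : 0 < Φ (ξ + 1) := (hK.nonneg (by linarith)).trans_lt
    (hK.strictMonoOn (by simp : ξ + 1 / 2 ∈ Ioi ξ) (by simp) (by linarith))
  exact tendsto_atTop_of_map_eq_mul hK.2.1 hpos
    (hK.strictMonoOn.monotoneOn.mono fun x (hx : ξ + 1 ≤ x) => show ξ < x by linarith)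
    (fun x (hx : ξ + 1 ≤ x) => hx.trans (le_exp_mul hK.1 hK.2.1 (by linarith)))
    (fun x hx => hK.map_exp (by linarith))

end IsKoenigs

section ProximateOrder

variable {Φ : ℝ → ℝ}

lemma hasDerivAt_epsK {d r : ℝ} (hd : HasDerivAt Φ d r) (hΦ : 1 < Φ r) :
    HasDerivAt (epsK Φ) (-(d / Φ r) / log (Φ r) ^ 2) r := by
  have heps : epsK Φ = (fun y => log (Φ y))⁻¹ := funext fun y => one_div _
  rw [heps]
  exact (hd.log (by linarith)).inv (log_pos hΦ).ne'

lemma tendsto_deriv_epsK_mul_mul_log {d : ℝ → ℝ} {C : ℝ} (hΦ : Tendsto Φ atTop atTop)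
    (hd : ∀ᶠ r in atTop, HasDerivAt Φ (d r) r) (hC : ∀ᶠ r in atTop, |r * d r * log r| ≤ C) :
    Tendsto (fun r => deriv (epsK Φ) r * r * log r) atTop (𝓝 0) := by
  have hden : Tendsto (fun r => Φ r * log (Φ r) ^ 2) atTop atTop :=
    hΦ.atTop_mul_atTop₀ ((tendsto_pow_atTop two_ne_zero).comp (tendsto_log_atTop.comp hΦ))
  have hlim : Tendsto (fun r => C * (Φ r * log (Φ r) ^ 2)⁻¹) atTop (𝓝 0) := by
    simpa using (tendsto_inv_atTop_zero.comp hden).const_mul C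
  refine squeeze_zero_norm' ?_ hlim
  filter_upwards [hd, hC, hΦ.eventually_gt_atTop 1] with r hdr hCr hΦr
  have hpos : 0 < Φ r * log (Φ r) ^ 2 := by have := log_pos hΦr; positivity
  rw [(hasDerivAt_epsK hdr hΦr).deriv]
  calc ‖-(d r / Φ r) / log (Φ r) ^ 2 * r * log r‖
      = |r * d r * log r| / (Φ r * log (Φ r) ^ 2) := by
        rw [Real.norm_eq_abs, ← abs_of_pos hpos, ← abs_div, ← abs_neg]
        congr 1
        field_simp
    _ ≤ C / (Φ r * log (Φ r) ^ 2) := by gcongr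
    _ = C * (Φ r * log (Φ r) ^ 2)⁻¹ := div_eq_mul_inv _ _

lemma tendsto_rhoK (hΦ : Tendsto Φ atTop atTop) : Tendsto (rhoK Φ) atTop (𝓝 (1 / 2)) := by
  show Tendsto (fun r => 1 / 2 + epsK Φ r) _ _
  simpa only [epsK, one_div, add_zero, Function.comp_def] using
    (tendsto_inv_atTop_zero.comp (tendsto_log_atTop.comp hΦ)).const_add (1 / 2 : ℝ)

lemma deriv_rhoK : deriv (rhoK Φ) = deriv (epsK Φ) :=
  funext fun _ => deriv_const_add _

end ProximateOrder

theorem stmt9_general (β ξ : ℝ) (Φ : ℝ → ℝ) (hK : IsKoenigs β ξ Φ) :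
    ∃ R : ℝ, (∀ r ≥ R, 1 < Φ r ∧ DifferentiableAt ℝ (epsK Φ) r) ∧
      Tendsto (fun r => deriv (epsK Φ) r * r * Real.log r) atTop (𝓝 0) ∧
      Tendsto (rhoK Φ) atTop (𝓝 (1 / 2)) ∧
      Tendsto (fun r => r * deriv (rhoK Φ) r * Real.log r) atTop (𝓝 0) := by
  have hΦ := hK.tendsto_atTop
  have hd : ∀ᶠ r in atTop, HasDerivAt Φ (koenigsDeriv β ξ r) r :=
    (eventually_gt_atTop ξ).mono fun r hr => hK.hasDerivAt hr
  have hbound : ∀ᶠ r in atTop, |r * koenigsDeriv β ξ r * log r| ≤ β * ξ ^ 2 := by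
    filter_upwards [eventually_ge_atTop (max ξ 1)] with r hr
    have h1 : 1 ≤ r := le_of_max_le_right hr
    have hnonneg : 0 ≤ r * koenigsDeriv β ξ r * log r :=
      mul_nonneg (mul_nonneg (by linarith) (koenigsDeriv_pos r).le) (log_nonneg h1)
    rw [abs_of_nonneg hnonneg]
    exact mul_koenigsDeriv_mul_log_le hK.beta_pos hK.1 hK.2.1 (le_of_max_le_left hr)
  have hε := tendsto_deriv_epsK_mul_mul_log hΦ hd hbound
  obtain ⟨R, hR⟩ := eventually_atTop.1 (hd.and (hΦ.eventually_gt_atTop 1))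
  refine ⟨R, fun r hr => ⟨(hR r hr).2, (hasDerivAt_epsK (hR r hr).1 (hR r hr).2).differentiableAt⟩,
    hε, tendsto_rhoK hΦ, ?_⟩
  simpa only [deriv_rhoK, mul_comm _ (deriv (epsK Φ) _)] using hε

/-- `ε(r) = 1/log Φ(r)` is differentiable for large `r` with
`ε'(r) r log r → 0`; consequently `ρ(r) = 1/2 + ε(r)` satisfies `ρ(r) → 1/2` and
`r ρ'(r) log r → 0`, i.e. `ρ` is a proximate order. -/
theorem stmt9 (β ξ : ℝ) (hβ0 : 0 < β) (hβ1 : β < 1 / Real.exp 1)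
    (Φ : ℝ → ℝ) (hK : IsKoenigs β ξ Φ) :
    ∃ R : ℝ, (∀ r ≥ R, 1 < Φ r ∧ DifferentiableAt ℝ (epsK Φ) r) ∧
      Tendsto (fun r => deriv (epsK Φ) r * r * Real.log r) atTop (𝓝 0) ∧
      Tendsto (rhoK Φ) atTop (𝓝 (1 / 2)) ∧
      Tendsto (fun r => r * deriv (rhoK Φ) r * Real.log r) atTop (𝓝 0) :=
  stmt9_general β ξ Φ hK
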